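/- Suppose ‖·‖ is any unitary similarity invariant norm on n×n complex matrices and k = n − 1. Then for every n×n density matrix X, d(X, D_{n,n−1}) ≤ d((1/n)·I_n, D_{n,n−1}). -/

import Mathlib

/-!
Let `λ` be the least eigenvalue of `X` and `c = nλ ∈ [0, 1]`, so that `X - c I/n` is positive
semidefinite and singular along an eigenvector `u` of `λ`. Given a rank-deficient density matrix
`Y`, rotate it unitarily to `Y₁` so that a kernel vector of `Y` goes to `u`. Then
`Y' = (X - c I/n) + c Y₁` is again a rank-deficient density matrix, and
`X - Y' = c (I/n - Y₁)`, so unitary similarity invariance gives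
`‖X - Y'‖ = c ‖I/n - Y‖ ≤ ‖I/n - Y‖`. Working in the eigenbasis of `X`, the rotation is a
permutation of the eigenvalues of `Y`.
-/

open Matrix BigOperators Finset
open scoped ComplexOrder

/-- The singular values of a square complex matrix. -/
noncomputable def singVals {n : ℕ} (A : Matrix (Fin n) (Fin n) ℂ) : Fin n → ℝ :=
  fun i => Real.sqrt ((Matrix.isHermitian_conjTranspose_mul_self A).eigenvalues i)

/-- The trace norm: the sum of singular values. -/
noncomputable def traceNorm {n : ℕ} (A : Matrix (Fin n) (Fin n) ℂ) : ℝ :=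
  ∑ i, singVals A i

/-- A density matrix: positive semidefinite with trace 1. -/
def IsDensity {n : ℕ} (X : Matrix (Fin n) (Fin n) ℂ) : Prop :=
  X.PosSemidef ∧ X.trace = 1

/-- Distance from `X` to the set of density matrices of rank at most `k`,
measured via a given norm `N`. -/
noncomputable def distToLowRank {n : ℕ} (N : Matrix (Fin n) (Fin n) ℂ → ℝ) (k : ℕ)
    (X : Matrix (Fin n) (Fin n) ℂ) : ℝ :=
  sInf {t | ∃ Y : Matrix (Fin n) (Fin n) ℂ, IsDensity Y ∧ Y.rank ≤ k ∧ t = N (X - Y)}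

lemma nonneg_of_add_le_of_smul {𝕜 E : Type*} [NormedField 𝕜] [AddCommGroup E] [Module 𝕜 E]
    {N : E → ℝ} (hN_tri : ∀ A B, N (A + B) ≤ N A + N B)
    (hN_smul : ∀ (c : 𝕜) A, N (c • A) = ‖c‖ * N A) (A : E) : 0 ≤ N A := by
  have h_neg : N (-A) = N A := by rw [← neg_one_smul 𝕜 A, hN_smul, norm_neg, norm_one, one_mul]
  have h_zero : N 0 = 0 := by rw [← zero_smul 𝕜 A, hN_smul, norm_zero, zero_mul]
  have h := hN_tri A (-A)
  rw [add_neg_cancel, h_zero, h_neg] at h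
  linarith

lemma distToLowRank_le_of_forall_exists {n : ℕ} {N : Matrix (Fin n) (Fin n) ℂ → ℝ}
    (hN : ∀ A, 0 ≤ N A) {k : ℕ} {X Z : Matrix (Fin n) (Fin n) ℂ}
    (h : ∀ Y, IsDensity Y → Y.rank ≤ k →
      ∃ Y', IsDensity Y' ∧ Y'.rank ≤ k ∧ N (X - Y') ≤ N (Z - Y)) :
    distToLowRank N k X ≤ distToLowRank N k Z := by
  unfold distToLowRank
  -- if no admissible `Y` exists, both sides are `sInf ∅ = 0`
  rcases Set.eq_empty_or_nonempty
    {t | ∃ Y : Matrix (Fin n) (Fin n) ℂ, IsDensity Y ∧ Y.rank ≤ k ∧ t = N (Z - Y)} with hZ | hZ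
  · have hX :
        {t | ∃ Y : Matrix (Fin n) (Fin n) ℂ, IsDensity Y ∧ Y.rank ≤ k ∧ t = N (X - Y)} = ∅ :=
      Set.eq_empty_of_forall_notMem <| by
        rintro _ ⟨Y, hY, hYk, -⟩
        exact Set.eq_empty_iff_forall_notMem.mp hZ _ ⟨Y, hY, hYk, rfl⟩
    rw [hX, hZ]
  · refine le_csInf hZ ?_
    rintro _ ⟨Y, hY, hYk, rfl⟩
    obtain ⟨Y', hY', hY'k, hle⟩ := h Y hY hYk
    refine le_trans ?_ hle
    refine csInf_le ?_ ⟨Y', hY', hY'k, rfl⟩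
    exact ⟨0, by rintro _ ⟨_, _, _, rfl⟩; exact hN _⟩

lemma exists_spectrum_shift {ι : Type*} [Fintype ι] [DecidableEq ι] {e f : ι → ℝ}
    (he : ∀ i, 0 ≤ e i) (he1 : ∑ i, e i = 1) (hf : ∀ i, 0 ≤ f i) (hf1 : ∑ i, f i = 1)
    {i₀ j₀ : ι} (hi₀ : ∀ i, e i₀ ≤ e i) (hj₀ : f j₀ = 0) :
    ∃ c ∈ Set.Icc (0 : ℝ) 1, ∃ g : ι → ℝ, (∀ i, 0 ≤ g i) ∧ ∑ i, g i = 1 ∧ g i₀ = 0 ∧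
      ∀ i, e i - g i = c * ((Fintype.card ι : ℝ)⁻¹ - f (Equiv.swap i₀ j₀ i)) := by
  set c : ℝ := Fintype.card ι * e i₀
  have hc0 : 0 ≤ c := mul_nonneg (Nat.cast_nonneg _) (he i₀)
  have hc1 : c ≤ 1 := by
    simpa [c, ← he1] using Finset.card_nsmul_le_sum univ e (e i₀) fun i _ ↦ hi₀ i
  have hcard : (Fintype.card ι : ℝ) ≠ 0 := by
    have : Nonempty ι := ⟨i₀⟩
    exact_mod_cast Fintype.card_ne_zero
  -- the spectrum of `X - c I/|ι|` plus `c` times the spectrum of `Y`, permuted so that its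
  -- zero sits at the minimal eigenvalue of `X`
  refine ⟨c, ⟨hc0, hc1⟩, fun i ↦ e i - e i₀ + c * f (Equiv.swap i₀ j₀ i),
    fun i ↦ add_nonneg (sub_nonneg.mpr (hi₀ i)) (mul_nonneg hc0 (hf _)), ?_, by simp [hj₀], ?_⟩
  · rw [sum_add_distrib, sum_sub_distrib, ← mul_sum, Equiv.sum_comp (Equiv.swap i₀ j₀) f, he1,
      hf1, sum_const, card_univ, nsmul_eq_mul]
    ring
  · intro i
    field_simp [c]
    ring

namespace Matrix

variable {n : ℕ}

lemma permMatrix_mem_unitaryGroup (σ : Equiv.Perm (Fin n)) :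
    σ.permMatrix ℂ ∈ unitaryGroup (Fin n) ℂ := by
  rw [mem_unitaryGroup_iff', star_eq_conjTranspose, conjTranspose_permMatrix, ← permMatrix_mul,
    mul_inv_cancel, permMatrix_one]

lemma conjTranspose_permMatrix_mul_diagonal_mul_permMatrix (σ : Equiv.Perm (Fin n))
    (d : Fin n → ℂ) :
    (σ.permMatrix ℂ)ᴴ * diagonal d * σ.permMatrix ℂ = diagonal (d ∘ σ.symm) := by
  rw [conjTranspose_permMatrix, Equiv.Perm.permMatrix, Equiv.Perm.permMatrix,
    PEquiv.toMatrix_toPEquiv_mul, PEquiv.mul_toMatrix_toPEquiv, submatrix_submatrix,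
    Function.comp_id, Function.id_comp, Equiv.Perm.inv_def]
  exact submatrix_diagonal_equiv d σ.symm

lemma rank_conjStarAlgAut (U : unitary (Matrix (Fin n) (Fin n) ℂ))
    (A : Matrix (Fin n) (Fin n) ℂ) :
    (Unitary.conjStarAlgAut ℂ _ U A).rank = A.rank := by
  rw [Unitary.conjStarAlgAut_apply, ← Unitary.coe_star]
  simp [-isUnit_iff_ne_zero, -Unitary.coe_star]

lemma IsHermitian.exists_eigenvalues_eq_zero_of_rank_lt {A : Matrix (Fin n) (Fin n) ℂ}
    (hA : A.IsHermitian) (h : A.rank < n) : ∃ j, hA.eigenvalues j = 0 := by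
  by_contra! hne
  rw [hA.rank_eq_card_non_zero_eigs, Fintype.card_congr (Equiv.subtypeUnivEquiv hne),
    Fintype.card_fin] at h
  exact h.false

end Matrix

lemma isDensity_conjStarAlgAut_diagonal {n : ℕ} (U : unitary (Matrix (Fin n) (Fin n) ℂ))
    {g : Fin n → ℝ} (hg : ∀ i, 0 ≤ g i) (hg1 : ∑ i, g i = 1) :
    IsDensity (Unitary.conjStarAlgAut ℂ _ U (diagonal (RCLike.ofReal ∘ g))) := by
  refine ⟨?_, ?_⟩
  · simpa [star_eq_conjTranspose] using
      ((posSemidef_diagonal_iff (d := RCLike.ofReal ∘ g)).mpr fun i ↦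
        Complex.zero_le_real.mpr (hg i)).mul_mul_conjTranspose_same
        (U : Matrix (Fin n) (Fin n) ℂ)
  · rw [Unitary.conjStarAlgAut_apply, trace_mul_cycle, Unitary.coe_star_mul_self, one_mul,
      trace_diagonal]
    simp only [Function.comp_apply, ← RCLike.ofReal_sum, hg1, RCLike.ofReal_one]

lemma IsDensity.sum_eigenvalues {n : ℕ} {X : Matrix (Fin n) (Fin n) ℂ} (hX : IsDensity X) :
    ∑ i, hX.1.1.eigenvalues i = 1 := by
  apply RCLike.ofReal_injective (K := ℂ)
  rw [RCLike.ofReal_sum, ← hX.1.1.trace_eq_sum_eigenvalues, hX.2, RCLike.ofReal_one]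

def UnitarySimilarityInvariant {n : ℕ} (N : Matrix (Fin n) (Fin n) ℂ → ℝ) : Prop :=
  ∀ A U : Matrix (Fin n) (Fin n) ℂ, U ∈ unitaryGroup (Fin n) ℂ → N (Uᴴ * A * U) = N A

namespace UnitarySimilarityInvariant

variable {n : ℕ} {N : Matrix (Fin n) (Fin n) ℂ → ℝ}

lemma apply_conjStarAlgAut (hN : UnitarySimilarityInvariant N)
    (U : unitary (Matrix (Fin n) (Fin n) ℂ)) (A : Matrix (Fin n) (Fin n) ℂ) :
    N (Unitary.conjStarAlgAut ℂ _ U A) = N A := by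
  simpa [star_eq_conjTranspose] using hN A (star U : unitary _) (star U).2

lemma apply_diagonal_comp_perm (hN : UnitarySimilarityInvariant N) (σ : Equiv.Perm (Fin n))
    (d : Fin n → ℂ) : N (diagonal (d ∘ σ)) = N (diagonal d) := by
  have h := hN (diagonal d) _ (permMatrix_mem_unitaryGroup σ⁻¹)
  rwa [conjTranspose_permMatrix_mul_diagonal_mul_permMatrix, Equiv.Perm.inv_def,
    Equiv.symm_symm] at h

lemma exists_isDensity_rank_lt_apply_sub_le (hN : UnitarySimilarityInvariant N)
    (hN_smul : ∀ (c : ℂ) A, N (c • A) = ‖c‖ * N A) (hN_nonneg : ∀ A, 0 ≤ N A)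
    {X Y : Matrix (Fin n) (Fin n) ℂ} (hX : IsDensity X) (hY : IsDensity Y) (hYr : Y.rank < n) :
    ∃ Y', IsDensity Y' ∧ Y'.rank < n ∧ N (X - Y') ≤ N ((1 / (n : ℂ)) • 1 - Y) := by
  have : Nonempty (Fin n) := ⟨⟨0, by omega⟩⟩
  obtain ⟨i₀, -, hi₀⟩ := exists_min_image univ hX.1.1.eigenvalues univ_nonempty
  obtain ⟨j₀, hj₀⟩ := hY.1.1.exists_eigenvalues_eq_zero_of_rank_lt hYr
  obtain ⟨c, ⟨hc0, hc1⟩, g, hg, hg1, hgi₀, hdiff⟩ := exists_spectrum_shift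
    hX.1.eigenvalues_nonneg hX.sum_eigenvalues hY.1.eigenvalues_nonneg hY.sum_eigenvalues
    (fun i ↦ hi₀ i (mem_univ i)) hj₀
  set U := hX.1.1.eigenvectorUnitary
  set σ := Equiv.swap i₀ j₀
  set d : Fin n → ℂ := fun i ↦ 1 / n - hY.1.1.eigenvalues i
  refine ⟨Unitary.conjStarAlgAut ℂ _ U (diagonal (RCLike.ofReal ∘ g)),
    isDensity_conjStarAlgAut_diagonal U hg hg1, ?_, ?_⟩
  · rw [rank_conjStarAlgAut, rank_diagonal]
    exact (Fintype.card_subtype_lt (x := i₀) (by simp [hgi₀])).trans_eq (Fintype.card_fin n)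
  have hXY' : diagonal (RCLike.ofReal ∘ hX.1.1.eigenvalues) - diagonal (RCLike.ofReal ∘ g)
      = (c : ℂ) • diagonal (d ∘ σ) := by
    rw [diagonal_sub, ← diagonal_smul]
    congr 1
    funext i
    have h := hdiff i
    rw [Fintype.card_fin] at h
    simp only [Function.comp_apply, Pi.smul_apply, d, smul_eq_mul,
      RCLike.ofReal_eq_complex_ofReal]
    rw [← Complex.ofReal_sub, h]
    push_cast
    ring
  have hYV :
      Unitary.conjStarAlgAut ℂ _ (star hY.1.1.eigenvectorUnitary) ((1 / (n : ℂ)) • 1 - Y)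
        = diagonal d := by
    rw [map_sub, map_smul, map_one, hY.1.1.conjStarAlgAut_star_eigenvectorUnitary,
      smul_one_eq_diagonal, diagonal_sub]
    rfl
  calc N (X - Unitary.conjStarAlgAut ℂ _ U (diagonal (RCLike.ofReal ∘ g)))
      = c * N (diagonal (d ∘ σ)) := by
        conv_lhs => rw [hX.1.1.spectral_theorem]
        rw [← map_sub, hXY', map_smul, hN_smul, hN.apply_conjStarAlgAut, Complex.norm_real,
          Real.norm_of_nonneg hc0]
    _ = c * N ((1 / (n : ℂ)) • 1 - Y) := by
        rw [hN.apply_diagonal_comp_perm, ← hYV, hN.apply_conjStarAlgAut]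
    _ ≤ N ((1 / (n : ℂ)) • 1 - Y) := mul_le_of_le_one_left (hN_nonneg _) hc1

end UnitarySimilarityInvariant

theorem stmt_6_general (n : ℕ) (hn : 1 ≤ n)
    (N : Matrix (Fin n) (Fin n) ℂ → ℝ)
    (hN_tri : ∀ A B, N (A + B) ≤ N A + N B)
    (hN_smul : ∀ (c : ℂ) A, N (c • A) = ‖c‖ * N A)
    (hN_usi : ∀ (A U : Matrix (Fin n) (Fin n) ℂ),
      U ∈ Matrix.unitaryGroup (Fin n) ℂ → N (Uᴴ * A * U) = N A)
    (X : Matrix (Fin n) (Fin n) ℂ) (hX : IsDensity X) :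
    distToLowRank N (n - 1) X
      ≤ distToLowRank N (n - 1) ((1 / (n : ℂ)) • (1 : Matrix (Fin n) (Fin n) ℂ)) := by
  have hN_nonneg := nonneg_of_add_le_of_smul hN_tri hN_smul
  refine distToLowRank_le_of_forall_exists hN_nonneg fun Y hY hYr ↦ ?_
  obtain ⟨Y', hY', hY'r, hle⟩ :=
    UnitarySimilarityInvariant.exists_isDensity_rank_lt_apply_sub_le hN_usi hN_smul hN_nonneg
      hX hY (by omega)
  exact ⟨Y', hY', by omega, hle⟩

theorem stmt_6 (n : ℕ) (hn : 1 ≤ n)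
    (N : Matrix (Fin n) (Fin n) ℂ → ℝ)
    (hN_tri : ∀ A B, N (A + B) ≤ N A + N B)
    (hN_smul : ∀ (c : ℂ) A, N (c • A) = ‖c‖ * N A)
    (hN_def : ∀ A, N A = 0 ↔ A = 0)
    (hN_usi : ∀ (A U : Matrix (Fin n) (Fin n) ℂ),
      U ∈ Matrix.unitaryGroup (Fin n) ℂ → N (Uᴴ * A * U) = N A)
    (X : Matrix (Fin n) (Fin n) ℂ) (hX : IsDensity X) :
    distToLowRank N (n - 1) X
      ≤ distToLowRank N (n - 1) ((1 / (n : ℂ)) • (1 : Matrix (Fin n) (Fin n) ℂ)) :=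
  stmt_6_general n hn N hN_tri hN_smul hN_usi X hX
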